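/- Let 0 < μ < 1 and let Φ, Ψ : ℝ → ℝ be twice continuously differentiable. Then the function u(x,t) = ∫₀¹ Φ(x+t(2p−1))·(p(1−p))^{μ/2−1} dp + t^{1−μ}·∫₀¹ Ψ(x+t(2p−1))·(p(1−p))^{−μ/2} dp satisfies the Euler–Poisson–Darboux equation u_xx(x,t) = u_tt(x,t) + (μ/t)·u_t(x,t) for all x ∈ ℝ and t > 0. -/

import Mathlib

/-!
Write `M_a f (x, t) = ∫₀¹ f (x + t (2p - 1)) (p (1 - p)) ^ a dp`, so that
`u = M_{μ/2-1} Φ + t ^ (1 - μ) M_{-μ/2} Ψ`. Differentiating under the integral sign,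
`∂ₓ² M_a f = M_a f''`, while each `t`-derivative brings down a factor `2p - 1`.
Since `(2p - 1)² = 1 - 4 p (1 - p)`, and an integration by parts against `(p (1 - p)) ^ (a + 1)`
turns `(2a + 2)/t · (2p - 1)` into `4 p (1 - p)`, `M_a f` solves the EPD equation of index
`2a + 2`. This is index `μ` for the `Φ`-term; the `Ψ`-term has index `2 - μ`, and multiplying a
solution of index `2 - μ` by `t ^ (1 - μ)` gives one of index `μ`.
-/

open MeasureTheory Real Set Filter Topology
open scoped Interval

noncomputable def betaKernel (a p : ℝ) : ℝ := (p * (1 - p)) ^ a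

noncomputable def segmentIntegral (G f : ℝ → ℝ) (x t : ℝ) : ℝ :=
  ∫ p in (0 : ℝ)..1, f (x + t * (2 * p - 1)) * G p

noncomputable def besselOp (μ : ℝ) (g : ℝ → ℝ) (t : ℝ) : ℝ :=
  deriv (deriv g) t + μ / t * deriv g t

section betaKernel

variable {a : ℝ}

lemma betaKernel_one_sub (p : ℝ) : betaKernel a (1 - p) = betaKernel a p := by
  rw [betaKernel, betaKernel, mul_comm, sub_sub_cancel]

lemma betaKernel_add_one (ha : a + 1 ≠ 0) (p : ℝ) :
    betaKernel (a + 1) p = p * (1 - p) * betaKernel a p := by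
  by_cases hp : p * (1 - p) = 0
  · simp [betaKernel, hp, zero_rpow ha]
  · rw [betaKernel, betaKernel, rpow_add_one hp, mul_comm]

lemma betaKernel_zero (ha : a ≠ 0) : betaKernel a 0 = 0 := by
  simp [betaKernel, zero_rpow ha]

lemma betaKernel_one (ha : a ≠ 0) : betaKernel a 1 = 0 := by
  simp [betaKernel, zero_rpow ha]

lemma continuous_betaKernel (ha : 0 ≤ a) : Continuous (betaKernel a) :=
  continuous_iff_continuousAt.2 fun _ ↦
    (continuousAt_rpow_const _ _ (Or.inr ha)).comp (by fun_prop)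

lemma hasDerivAt_betaKernel_add_one {p : ℝ} (hp : p * (1 - p) ≠ 0) :
    HasDerivAt (betaKernel (a + 1)) ((a + 1) * (1 - 2 * p) * betaKernel a p) p := by
  have hq : HasDerivAt (fun q : ℝ ↦ q * (1 - q)) (1 - 2 * p) p :=
    ((hasDerivAt_id p).mul ((hasDerivAt_id p).const_sub 1)).congr_deriv (by simp only [id]; ring)
  have h := (hasDerivAt_rpow_const (p := a + 1) (Or.inl hp)).comp p hq
  rw [add_sub_cancel_right] at h
  exact h.congr_deriv (by rw [betaKernel]; ring)

/-- Near `0` the kernel is `p ^ a` times a continuous factor; near `1` use the symmetry. -/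
lemma intervalIntegrable_betaKernel (ha : -1 < a) :
    IntervalIntegrable (betaKernel a) volume 0 1 := by
  have hleft : IntervalIntegrable (betaKernel a) volume 0 (1 / 2) := by
    have hcont : ContinuousOn (fun p : ℝ ↦ (1 - p) ^ a) [[0, 1 / 2]] := by
      refine ContinuousOn.rpow_const (by fun_prop) fun p hp ↦ Or.inl ?_
      rw [uIcc_of_le (by norm_num)] at hp
      linarith [hp.2]
    refine (intervalIntegrable_congr fun p hp ↦ ?_).1
      ((intervalIntegral.intervalIntegrable_rpow' ha).continuousOn_mul hcont)
    rw [uIoc_of_le (by norm_num)] at hp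
    rw [betaKernel, mul_rpow hp.1.le (by linarith [hp.2]), mul_comm]
  have hright := hleft.comp_sub_left 1
  simp only [betaKernel_one_sub] at hright
  norm_num at hright
  exact hleft.trans hright.symm

end betaKernel

theorem hasDerivAt_integral_comp_add_mul {f G c k : ℝ → ℝ} {a b s₀ : ℝ} (hf : ContDiff ℝ 1 f)
    (hc : Continuous c) (hk : Continuous k) (hG : IntervalIntegrable G volume a b) :
    HasDerivAt (fun s ↦ ∫ p in a..b, f (c p + s * k p) * G p)
      (∫ p in a..b, deriv f (c p + s₀ * k p) * k p * G p) s₀ := by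
  have hf₀ := hf.continuous
  have hf₁ := hf.continuous_deriv le_rfl
  obtain ⟨C, hC⟩ := ((isCompact_closedBall s₀ 1).prod isCompact_uIcc).exists_bound_of_continuousOn
    (f := fun q : ℝ × ℝ ↦ deriv f (c q.2 + q.1 * k q.2) * k q.2) (by fun_prop : Continuous _).continuousOn
  have hGm := hG.def'.aestronglyMeasurable
  refine (intervalIntegral.hasDerivAt_integral_of_dominated_loc_of_deriv_le
    (F' := fun s p ↦ deriv f (c p + s * k p) * k p * G p) (bound := fun p ↦ C * ‖G p‖)
    (Metric.ball_mem_nhds s₀ one_pos) ?_ ?_ ?_ ?_ (hG.norm.const_mul C) ?_).2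
  · exact .of_forall fun s ↦ (by fun_prop : Continuous _).aestronglyMeasurable.mul hGm
  · exact hG.continuousOn_mul (by fun_prop : Continuous _).continuousOn
  · exact (by fun_prop : Continuous _).aestronglyMeasurable.mul hGm
  · refine .of_forall fun p hp s hs ↦ ?_
    rw [norm_mul]
    exact mul_le_mul_of_nonneg_right
      (hC (s, p) ⟨Metric.ball_subset_closedBall hs, uIoc_subset_uIcc hp⟩) (norm_nonneg _)
  · refine .of_forall fun p _ s _ ↦ ?_
    have hline : HasDerivAt (fun s ↦ c p + s * k p) (k p) s := by
      simpa using ((hasDerivAt_id s).mul_const (k p)).const_add (c p)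
    exact (((hf.differentiable one_ne_zero _).hasDerivAt).comp s hline).mul_const (G p)

section segmentIntegral

variable {G f : ℝ → ℝ} {x t : ℝ}

lemma hasDerivAt_segmentIntegral_x (hf : ContDiff ℝ 1 f) (hG : IntervalIntegrable G volume 0 1) :
    HasDerivAt (fun y ↦ segmentIntegral G f y t) (segmentIntegral G (deriv f) x t) x := by
  simpa [segmentIntegral, add_comm] using hasDerivAt_integral_comp_add_mul (s₀ := x)
    (k := fun _ ↦ 1) hf (by fun_prop : Continuous fun p : ℝ ↦ t * (2 * p - 1)) continuous_const hG

lemma hasDerivAt_segmentIntegral_t (hf : ContDiff ℝ 1 f) (hG : IntervalIntegrable G volume 0 1) :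
    HasDerivAt (segmentIntegral G f x)
      (segmentIntegral (fun p ↦ (2 * p - 1) * G p) (deriv f) x t) t :=
  (hasDerivAt_integral_comp_add_mul (s₀ := t) hf continuous_const
    (by fun_prop : Continuous fun p : ℝ ↦ 2 * p - 1) hG).congr_deriv
    (by simp only [segmentIntegral, mul_assoc])

lemma differentiable_segmentIntegral_t (hf : ContDiff ℝ 1 f)
    (hG : IntervalIntegrable G volume 0 1) : Differentiable ℝ (segmentIntegral G f x) :=
  fun _ ↦ (hasDerivAt_segmentIntegral_t hf hG).differentiableAt

lemma deriv_segmentIntegral_t (hf : ContDiff ℝ 1 f) (hG : IntervalIntegrable G volume 0 1) :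
    deriv (segmentIntegral G f x) = segmentIntegral (fun p ↦ (2 * p - 1) * G p) (deriv f) x :=
  funext fun _ ↦ (hasDerivAt_segmentIntegral_t hf hG).deriv

lemma differentiable_deriv_segmentIntegral_t (hf : ContDiff ℝ 2 f)
    (hG : IntervalIntegrable G volume 0 1) : Differentiable ℝ (deriv (segmentIntegral G f x)) := by
  rw [deriv_segmentIntegral_t (hf.of_le one_le_two) hG]
  exact fun _ ↦ (hasDerivAt_segmentIntegral_t (hf.deriv' (n := 1))
    (hG.continuousOn_mul (by fun_prop : Continuous fun p : ℝ ↦ 2 * p - 1).continuousOn)).differentiableAt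

lemma segmentIntegral_sq_mul_betaKernel {a : ℝ} (ha : -1 < a) (hf : Continuous f) :
    segmentIntegral (fun p ↦ (2 * p - 1) * ((2 * p - 1) * betaKernel a p)) f x t =
      segmentIntegral (betaKernel a) f x t - 4 * segmentIntegral (betaKernel (a + 1)) f x t := by
  have hb := continuous_betaKernel (by linarith : 0 ≤ a + 1)
  have h₀ : IntervalIntegrable (fun p ↦ f (x + t * (2 * p - 1)) * betaKernel a p) volume 0 1 :=
    (intervalIntegrable_betaKernel ha).continuousOn_mul (by fun_prop : Continuous _).continuousOn
  have h₁ : IntervalIntegrable (fun p ↦ 4 * (f (x + t * (2 * p - 1)) * betaKernel (a + 1) p))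
      volume 0 1 :=
    Continuous.intervalIntegrable (by fun_prop) _ _
  rw [segmentIntegral, segmentIntegral, segmentIntegral, ← intervalIntegral.integral_const_mul,
    ← intervalIntegral.integral_sub h₀ h₁]
  congr 1 with p
  rw [betaKernel_add_one (by linarith)]
  ring

/-- Integration by parts against `betaKernel (a + 1)`, whose derivative is
`(a + 1) (1 - 2p) betaKernel a` and which vanishes at both ends. -/
lemma add_one_mul_segmentIntegral_mul_betaKernel {a : ℝ} (ha : -1 < a) (hf : ContDiff ℝ 1 f) :
    (a + 1) * segmentIntegral (fun p ↦ (2 * p - 1) * betaKernel a p) f x t =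
      2 * t * segmentIntegral (betaKernel (a + 1)) (deriv f) x t := by
  have hf₁ := hf.continuous_deriv le_rfl
  have hibp := intervalIntegral.integral_mul_deriv_eq_deriv_mul_of_hasDerivAt (a := 0) (b := 1)
    (u := fun p ↦ f (x + t * (2 * p - 1))) (v := betaKernel (a + 1))
    (u' := fun p ↦ deriv f (x + t * (2 * p - 1)) * (2 * t))
    (v' := fun p ↦ (a + 1) * (1 - 2 * p) * betaKernel a p)
    (hf.continuous.comp (by fun_prop)).continuousOn
    (continuous_betaKernel (by linarith)).continuousOn
    (fun p _ ↦ ((hf.differentiable one_ne_zero _).hasDerivAt.comp p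
      ((((hasDerivAt_id p).const_mul 2).sub_const 1).const_mul t |>.const_add x)).congr_deriv
      (by simp only [id, mul_one]; ring))
    (fun p hp ↦ by
      simp only [min_eq_left zero_le_one, max_eq_right zero_le_one, mem_Ioo] at hp
      exact hasDerivAt_betaKernel_add_one (by nlinarith))
    (Continuous.intervalIntegrable (by fun_prop) _ _)
    ((intervalIntegrable_betaKernel ha).continuousOn_mul (by fun_prop : Continuous _).continuousOn)
  rw [betaKernel_one (by linarith), betaKernel_zero (by linarith)] at hibp
  have hlhs : (a + 1) * segmentIntegral (fun p ↦ (2 * p - 1) * betaKernel a p) f x t =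
      -∫ p in (0 : ℝ)..1, f (x + t * (2 * p - 1)) * ((a + 1) * (1 - 2 * p) * betaKernel a p) := by
    rw [segmentIntegral, ← intervalIntegral.integral_const_mul, ← intervalIntegral.integral_neg]
    congr 1 with p
    ring
  have hrhs : 2 * t * segmentIntegral (betaKernel (a + 1)) (deriv f) x t =
      ∫ p in (0 : ℝ)..1, deriv f (x + t * (2 * p - 1)) * (2 * t) * betaKernel (a + 1) p := by
    rw [segmentIntegral, ← intervalIntegral.integral_const_mul]
    congr 1 with p
    ring
  rw [hlhs, hrhs, hibp]
  ring

end segmentIntegral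

lemma besselOp_segmentIntegral_betaKernel {a x t : ℝ} {f : ℝ → ℝ} (ha : -1 < a)
    (hf : ContDiff ℝ 2 f) (ht : t ≠ 0) :
    besselOp (2 * a + 2) (segmentIntegral (betaKernel a) f x) t =
      segmentIntegral (betaKernel a) (deriv (deriv f)) x t := by
  have hw := intervalIntegrable_betaKernel ha
  have hf' := hf.deriv' (n := 1)
  have hibp := add_one_mul_segmentIntegral_mul_betaKernel ha hf' (x := x) (t := t)
  rw [besselOp, deriv_segmentIntegral_t (hf.of_le one_le_two) hw,
    (hasDerivAt_segmentIntegral_t hf'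
      (hw.continuousOn_mul (by fun_prop : Continuous fun p : ℝ ↦ 2 * p - 1).continuousOn)).deriv,
    segmentIntegral_sq_mul_betaKernel ha (hf'.continuous_deriv le_rfl)]
  field_simp
  linear_combination 2 * hibp

section besselOp

variable {g : ℝ → ℝ} {μ t : ℝ}

theorem besselOp_add {g₁ g₂ : ℝ → ℝ} (hg₁ : ∀ᶠ s in 𝓝 t, DifferentiableAt ℝ g₁ s)
    (hg₁' : DifferentiableAt ℝ (deriv g₁) t) (hg₂ : ∀ᶠ s in 𝓝 t, DifferentiableAt ℝ g₂ s)
    (hg₂' : DifferentiableAt ℝ (deriv g₂) t) :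
    besselOp μ (fun s ↦ g₁ s + g₂ s) t = besselOp μ g₁ t + besselOp μ g₂ t := by
  have h : deriv (fun s ↦ g₁ s + g₂ s) =ᶠ[𝓝 t] fun s ↦ deriv g₁ s + deriv g₂ s := by
    filter_upwards [hg₁, hg₂] with s h₁ h₂ using deriv_add h₁ h₂
  rw [besselOp, besselOp, besselOp, h.deriv_eq, h.self_of_nhds, deriv_fun_add hg₁' hg₂']
  ring

lemma deriv_rpow_mul_eventuallyEq {r : ℝ} (ht : 0 < t)
    (hg : ∀ᶠ s in 𝓝 t, DifferentiableAt ℝ g s) :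
    deriv (fun s ↦ s ^ r * g s) =ᶠ[𝓝 t] fun s ↦ r * s ^ (r - 1) * g s + s ^ r * deriv g s := by
  filter_upwards [hg, Ioi_mem_nhds ht] with s hs hs₀
  exact ((hasDerivAt_rpow_const (Or.inl (ne_of_gt hs₀))).mul hs.hasDerivAt).deriv

lemma differentiableAt_deriv_rpow_mul {r : ℝ} (ht : 0 < t)
    (hg : ∀ᶠ s in 𝓝 t, DifferentiableAt ℝ g s) (hg' : DifferentiableAt ℝ (deriv g) t) :
    DifferentiableAt ℝ (deriv fun s ↦ s ^ r * g s) t := by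
  have hpow (q : ℝ) : DifferentiableAt ℝ (fun s : ℝ ↦ s ^ q) t :=
    differentiableAt_id.rpow_const (Or.inl ht.ne')
  exact (deriv_rpow_mul_eventuallyEq ht hg).differentiableAt_iff.2
    ((((hpow _).const_mul r).mul hg.self_of_nhds).add ((hpow r).mul hg'))

theorem besselOp_rpow_one_sub_mul (ht : 0 < t) (hg : ∀ᶠ s in 𝓝 t, DifferentiableAt ℝ g s)
    (hg' : DifferentiableAt ℝ (deriv g) t) :
    besselOp μ (fun s ↦ s ^ (1 - μ) * g s) t = t ^ (1 - μ) * besselOp (2 - μ) g t := by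
  have hpow (q : ℝ) : HasDerivAt (fun s : ℝ ↦ s ^ q) (q * t ^ (q - 1)) t :=
    hasDerivAt_rpow_const (Or.inl ht.ne')
  have h := deriv_rpow_mul_eventuallyEq (r := 1 - μ) ht hg
  have h' : HasDerivAt (fun s ↦ (1 - μ) * s ^ (1 - μ - 1) * g s + s ^ (1 - μ) * deriv g s) _ t :=
    (((hpow _).const_mul _).mul hg.self_of_nhds.hasDerivAt).add ((hpow _).mul hg'.hasDerivAt)
  rw [besselOp, besselOp, h.deriv_eq, h.self_of_nhds, h'.deriv]
  beta_reduce
  rw [rpow_sub_one ht.ne' (1 - μ - 1), rpow_sub_one ht.ne' (1 - μ)]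
  field_simp
  ring

end besselOp

/-- the general solution formula for the Euler–Poisson–Darboux equation:
for `0 < μ < 1` and `Φ, Ψ ∈ C²`, the function
`u(x,t) = ∫₀¹ Φ(x+t(2p-1)) (p(1-p))^{μ/2-1} dp + t^{1-μ} ∫₀¹ Ψ(x+t(2p-1)) (p(1-p))^{-μ/2} dp`
satisfies `u_xx = u_tt + (μ/t) u_t` for all `x ∈ ℝ`, `t > 0`. -/
theorem epd_general_solution (μ : ℝ) (hμ0 : 0 < μ) (hμ1 : μ < 1) (Φ Ψ : ℝ → ℝ)
    (hΦ : ContDiff ℝ 2 Φ) (hΨ : ContDiff ℝ 2 Ψ)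
    (u : ℝ → ℝ → ℝ)
    (hu : ∀ x t : ℝ, u x t =
      (∫ p in (0 : ℝ)..1, Φ (x + t * (2 * p - 1)) * (p * (1 - p)) ^ (μ / 2 - 1)) +
        t ^ (1 - μ) * ∫ p in (0 : ℝ)..1, Ψ (x + t * (2 * p - 1)) * (p * (1 - p)) ^ (-μ / 2)) :
    ∀ x t : ℝ, 0 < t →
      deriv (deriv (fun x' => u x' t)) x =
        deriv (deriv (u x)) t + (μ / t) * deriv (u x) t := by
  intro x t ht
  obtain rfl : u = fun x t ↦ segmentIntegral (betaKernel (μ / 2 - 1)) Φ x t +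
      t ^ (1 - μ) * segmentIntegral (betaKernel (-μ / 2)) Ψ x t := funext₂ hu
  have hw₁ := intervalIntegrable_betaKernel (a := μ / 2 - 1) (by linarith)
  have hw₂ := intervalIntegrable_betaKernel (a := -μ / 2) (by linarith)
  have hΦ₁ := hΦ.of_le one_le_two
  have hΨ₁ := hΨ.of_le one_le_two
  beta_reduce
  have hx {f₁ f₂ : ℝ → ℝ} (h₁ : ContDiff ℝ 1 f₁) (h₂ : ContDiff ℝ 1 f₂) (y : ℝ) :
      HasDerivAt (fun y ↦ segmentIntegral (betaKernel (μ / 2 - 1)) f₁ y t +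
        t ^ (1 - μ) * segmentIntegral (betaKernel (-μ / 2)) f₂ y t) _ y :=
    (hasDerivAt_segmentIntegral_x h₁ hw₁).add ((hasDerivAt_segmentIntegral_x h₂ hw₂).const_mul _)
  rw [funext (hx hΦ₁ hΨ₁ · |>.deriv), (hx (hΦ.deriv' (n := 1)) (hΨ.deriv' (n := 1)) x).deriv]
  have hΨt : ∀ᶠ s in 𝓝 t, DifferentiableAt ℝ (segmentIntegral (betaKernel (-μ / 2)) Ψ x) s :=
    .of_forall (differentiable_segmentIntegral_t hΨ₁ hw₂)
  change _ = besselOp μ _ t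
  rw [besselOp_add (.of_forall (differentiable_segmentIntegral_t hΦ₁ hw₁))
      (differentiable_deriv_segmentIntegral_t hΦ hw₁ t) ?_ (differentiableAt_deriv_rpow_mul ht hΨt
        (differentiable_deriv_segmentIntegral_t hΨ hw₂ t)),
    besselOp_rpow_one_sub_mul ht hΨt (differentiable_deriv_segmentIntegral_t hΨ hw₂ t)]
  · have h₁ := besselOp_segmentIntegral_betaKernel (x := x) (by linarith : -1 < μ / 2 - 1) hΦ ht.ne'
    have h₂ := besselOp_segmentIntegral_betaKernel (x := x) (by linarith : -1 < -μ / 2) hΨ ht.ne'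
    rw [show 2 * (μ / 2 - 1) + 2 = μ by ring] at h₁
    rw [show 2 * (-μ / 2) + 2 = 2 - μ by ring] at h₂
    rw [h₁, h₂]
  · filter_upwards [hΨt, Ioi_mem_nhds ht] with s hs hs₀
    exact (differentiableAt_id.rpow_const (Or.inl (ne_of_gt hs₀))).mul hs
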